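/- K_TBB(2) = 5: among all Turing machines with at most 2 states that halt on the all-zero tape with a computed word containing exactly BB(2) = 4 ones, the minimum number of steps taken before halting is exactly 5. -/

import Mathlib

/-- Head movement directions. -/
inductive Dir : Type
  | left | stay | right

/-- Displacement of the head for each direction. -/
def Dir.move : Dir → ℤ
  | .left => -1
  | .stay => 0
  | .right => 1

/-- A configuration of a Turing machine with state type `Q`: current state,
head position and the two-way infinite binary tape. -/
structure Cfg (Q : Type) where
  state : Q
  head : ℤ
  tape : ℤ → Bool

/-- One step of the machine with partial transition function `f`
(`none` if the machine halts, i.e. `f` is undefined on the current pair). -/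
def stepTM {Q : Type} (f : Q × Bool → Option (Q × Bool × Dir)) (c : Cfg Q) :
    Option (Cfg Q) :=
  (f (c.state, c.tape c.head)).map fun qbd =>
    ⟨qbd.1, c.head + qbd.2.2.move, Function.update c.tape c.head qbd.2.1⟩

/-- Running `t` steps (returns `none` if the machine halts strictly before `t` steps). -/
def stepsTM {Q : Type} (f : Q × Bool → Option (Q × Bool × Dir)) :
    ℕ → Cfg Q → Option (Cfg Q)
  | 0, c => some c
  | t + 1, c => (stepTM f c).bind (stepsTM f t)

/-- Initial configuration: initial state `q0`, head at `0`, all-zero tape. -/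
def initCfg {Q : Type} (q0 : Q) : Cfg Q := ⟨q0, 0, fun _ => false⟩

/-- The machine is halted in configuration `c`: the transition function is
undefined on the current (state, symbol) pair. -/
def Halted {Q : Type} (f : Q × Bool → Option (Q × Bool × Dir)) (c : Cfg Q) : Prop :=
  f (c.state, c.tape c.head) = none

/-- `w` is the tape contents from the leftmost 1 to the rightmost 1
(the empty word if the tape contains no 1). -/
def TapeWord (tape : ℤ → Bool) (w : List Bool) : Prop :=
  ∃ i : ℤ,
    (∀ k : ℕ, k < w.length → w.getD k false = tape (i + k)) ∧
    (∀ j : ℤ, tape j = true → i ≤ j ∧ j < i + w.length) ∧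
    (w ≠ [] → w.getD 0 false = true ∧ w.getLastD false = true)

/-- The machine with transition function `f` and initial state `q0`, started on
the all-zero tape, halts after exactly `t` steps computing the word `w`. -/
def Computes {Q : Type} (f : Q × Bool → Option (Q × Bool × Dir)) (q0 : Q)
    (w : List Bool) (t : ℕ) : Prop :=
  ∃ c : Cfg Q, stepsTM f t (initCfg q0) = some c ∧ Halted f c ∧ TapeWord c.tape w


/-!
A machine that halts after `t` steps has only written cells its head visited at times
`0, …, t - 1`, so it leaves at most `t` ones. Four ones in at most four steps therefore force
the head onto four distinct cells; in particular the first two steps read blanks and move in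
the same direction `d`. With only two states `q₀, q₁`, the set `{q₀, q₁}` is then closed under
blank transitions, all moving in direction `d`, so the machine sweeps over blank tape forever
and never halts. The busy beaver champion reaches four ones in five steps.
-/

open Finset

theorem Dir.eq_of_move_ne_zero {a b : Dir} (ha : a.move ≠ 0) (hb : b.move ≠ 0)
    (hab : a.move + b.move ≠ 0) : a = b := by
  cases a <;> cases b <;> simp [Dir.move] at *

theorem List.count_true_le_card {w : List Bool} {i : ℤ} {S : Finset ℤ}
    (h : ∀ k < w.length, w.getD k false = true → i + k ∈ S) : w.count true ≤ #S := by
  induction w generalizing i S with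
  | nil => simp
  | cons a w ih =>
    have hw : ∀ k < w.length, w.getD k false = true → i + 1 + k ∈ S := fun k hk hwk => by
      simpa [add_assoc, add_comm (1 : ℤ)] using h (k + 1) (by simpa using hk) (by simpa using hwk)
    cases a with
    | false => simpa using ih hw
    | true =>
      have hi : i ∈ S := by simpa using h 0 (by simp) rfl
      have hw' : ∀ k < w.length, w.getD k false = true → i + 1 + k ∈ S.erase i :=
        fun k hk hwk => mem_erase.mpr ⟨by omega, hw k hk hwk⟩
      have hcount := ih hw'
      rw [card_erase_of_mem hi] at hcount
      have hpos := card_pos.mpr ⟨i, hi⟩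
      simp only [List.count_cons_self]
      omega

theorem TapeWord.count_true_le_card {tape : ℤ → Bool} {w : List Bool} (hw : TapeWord tape w)
    {S : Finset ℤ} (hS : ∀ j, tape j = true → j ∈ S) : w.count true ≤ #S := by
  obtain ⟨i, hget, -, -⟩ := hw
  exact List.count_true_le_card fun k hk hwk => hS _ (hget k hk ▸ hwk)

section Run

variable {Q : Type} {f : Q × Bool → Option (Q × Bool × Dir)}

/-- Head position after `i` steps (junk value `0` once the machine has halted). -/
def headAt (f : Q × Bool → Option (Q × Bool × Dir)) (c : Cfg Q) (i : ℕ) : ℤ :=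
  ((stepsTM f i c).map Cfg.head).getD 0

theorem headAt_zero (c : Cfg Q) : headAt f c 0 = c.head := rfl

theorem headAt_succ {c c₁ : Cfg Q} (h : stepTM f c = some c₁) (i : ℕ) :
    headAt f c (i + 1) = headAt f c₁ i := by
  simp [headAt, stepsTM, h]

theorem tape_eq_true_of_stepsTM {t : ℕ} {c c' : Cfg Q} (h : stepsTM f t c = some c') {j : ℤ}
    (hj : c'.tape j = true) : c.tape j = true ∨ ∃ i < t, headAt f c i = j := by
  induction t generalizing c with
  | zero =>
    simp only [stepsTM, Option.some.injEq] at h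
    exact .inl (h ▸ hj)
  | succ t ih =>
    obtain ⟨c₁, h₁, h⟩ := Option.bind_eq_some_iff.mp h
    rcases ih h with hc₁ | ⟨i, hi, rfl⟩
    · by_cases hjc : j = c.head
      · exact .inr ⟨0, t.succ_pos, hjc ▸ headAt_zero c⟩
      · left
        obtain ⟨qbd, -, rfl⟩ := Option.map_eq_some_iff.mp h₁
        simpa [Function.update_of_ne hjc] using hc₁
    · exact .inr ⟨i + 1, by omega, headAt_succ h₁ i⟩

theorem count_true_le_card_headAt {q₀ : Q} {t : ℕ} {c : Cfg Q}
    (h : stepsTM f t (initCfg q₀) = some c) {w : List Bool} (hw : TapeWord c.tape w) :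
    w.count true ≤ #((range t).image (headAt f (initCfg q₀))) :=
  hw.count_true_le_card fun j hj => by
    rcases tape_eq_true_of_stepsTM h hj with hj | ⟨i, hi, rfl⟩
    · simp [initCfg] at hj
    · exact mem_image_of_mem _ (mem_range.mpr hi)

end Run

section Sweep

variable {Q : Type} {f : Q × Bool → Option (Q × Bool × Dir)} {A : Set Q} {d : Dir}

def SweepsBlank (A : Set Q) (d : Dir) (c : Cfg Q) : Prop :=
  c.state ∈ A ∧ ∀ k : ℕ, c.tape (c.head + k * d.move) = false

theorem SweepsBlank.tape_head {c : Cfg Q} (hc : SweepsBlank A d c) : c.tape c.head = false := by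
  simpa using hc.2 0

variable (hA : ∀ q ∈ A, ∃ q' ∈ A, ∃ b, f (q, false) = some (q', b, d))
include hA

theorem SweepsBlank.not_halted {c : Cfg Q} (hc : SweepsBlank A d c) : ¬Halted f c := by
  obtain ⟨q', -, b, hf⟩ := hA _ hc.1
  simp [Halted, hc.tape_head, hf]

variable (hd : d ≠ .stay)
include hd

theorem SweepsBlank.exists_stepTM {c : Cfg Q} (hc : SweepsBlank A d c) :
    ∃ c', stepTM f c = some c' ∧ SweepsBlank A d c' := by
  obtain ⟨q', hq', b, hf⟩ := hA _ hc.1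
  refine ⟨⟨q', c.head + d.move, Function.update c.tape c.head b⟩,
    by simp [stepTM, hc.tape_head, hf], hq', fun k => ?_⟩
  have hne : c.head + d.move + k * d.move ≠ c.head := by
    cases d <;> simp [Dir.move] at hd ⊢ <;> omega
  show Function.update c.tape c.head b (c.head + d.move + k * d.move) = false
  rw [Function.update_of_ne hne]
  convert hc.2 (k + 1) using 2
  push_cast
  ring

theorem SweepsBlank.not_halted_of_stepsTM {c c' : Cfg Q} (hc : SweepsBlank A d c) {t : ℕ}
    (h : stepsTM f t c = some c') : ¬Halted f c' := by
  induction t generalizing c with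
  | zero =>
    cases Option.some.inj h
    exact hc.not_halted hA
  | succ t ih =>
    obtain ⟨c₁, h₁, hc₁⟩ := hc.exists_stepTM hA hd
    exact ih hc₁ (by simpa [stepsTM, h₁] using h)

end Sweep

theorem exists_sweep_of_headAt_injOn {Q : Type} {f : Q × Bool → Option (Q × Bool × Dir)}
    {q₀ : Q} {t : ℕ} {c : Cfg Q} (h : stepsTM f t (initCfg q₀) = some c) (ht : 2 ≤ t)
    (hinj : Set.InjOn (headAt f (initCfg q₀)) {0, 1, 2}) :
    ∃ q₁ q₂ b₀ b₁ d, d ≠ .stay ∧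
      f (q₀, false) = some (q₁, b₀, d) ∧ f (q₁, false) = some (q₂, b₁, d) := by
  obtain ⟨t, rfl⟩ : ∃ s, t = s + 2 := ⟨t - 2, by omega⟩
  obtain ⟨c₁, h₁, h⟩ := Option.bind_eq_some_iff.mp h
  obtain ⟨c₂, h₂, -⟩ := Option.bind_eq_some_iff.mp h
  have hne : ∀ i j, i ∈ ({0, 1, 2} : Set ℕ) → j ∈ ({0, 1, 2} : Set ℕ) → i ≠ j →
      headAt f (initCfg q₀) i ≠ headAt f (initCfg q₀) j := fun i j hi hj => mt (hinj hi hj)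
  have h01 := hne 0 1 (by simp) (by simp) (by decide)
  have h02 := hne 0 2 (by simp) (by simp) (by decide)
  have h12 := hne 1 2 (by simp) (by simp) (by decide)
  rw [headAt_succ h₁, headAt_succ h₁, headAt_succ h₂] at *
  obtain ⟨⟨q₁, b₀, d₀⟩, hf₀, rfl⟩ := Option.map_eq_some_iff.mp h₁
  obtain ⟨⟨q₂, b₁, d₁⟩, hf₁, rfl⟩ := Option.map_eq_some_iff.mp h₂
  simp only [headAt_zero, initCfg, zero_add] at h01 h02 h12 hf₀ hf₁
  have hd₀ : d₀.move ≠ 0 := fun h => h01 h.symm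
  have hd₁ : d₁.move ≠ 0 := by omega
  have hd : d₁ = d₀ := Dir.eq_of_move_ne_zero hd₁ hd₀ (by omega)
  subst hd
  refine ⟨q₁, q₂, b₀, b₁, d₁, fun h => hd₀ (h ▸ rfl), hf₀, ?_⟩
  rwa [Function.update_of_ne hd₀] at hf₁

theorem not_halted_of_headAt_injOn {f : Fin 2 × Bool → Option (Fin 2 × Bool × Dir)}
    {q₀ : Fin 2} {t : ℕ} {c : Cfg (Fin 2)} (h : stepsTM f t (initCfg q₀) = some c) (ht : 2 ≤ t)
    (hinj : Set.InjOn (headAt f (initCfg q₀)) {0, 1, 2}) : ¬Halted f c := by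
  obtain ⟨q₁, q₂, b₀, b₁, d, hd, hf₀, hf₁⟩ := exists_sweep_of_headAt_injOn h ht hinj
  have hA : ∀ q ∈ ({q₀, q₁} : Set (Fin 2)), ∃ q' ∈ ({q₀, q₁} : Set (Fin 2)), ∃ b,
      f (q, false) = some (q', b, d) := by
    rintro q (hq | hq) <;> rw [hq]
    · exact ⟨q₁, by simp, b₀, hf₀⟩
    · refine ⟨q₂, ?_, b₁, hf₁⟩
      by_cases h01 : q₀ = q₁
      · subst h01
        rw [hf₀] at hf₁
        simp only [Option.some.injEq, Prod.mk.injEq] at hf₁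
        simp [← hf₁.1]
      · simp only [Set.mem_insert_iff, Set.mem_singleton_iff]
        omega
  exact SweepsBlank.not_halted_of_stepsTM hA hd ⟨by simp [initCfg], fun _ => rfl⟩ h

/-- The two-state busy beaver champion, with its halting transition left undefined. -/
def bb2 : Fin 2 × Bool → Option (Fin 2 × Bool × Dir)
  | (0, false) => some (1, true, Dir.right)
  | (0, true) => some (1, true, Dir.left)
  | (1, false) => some (0, true, Dir.left)
  | (1, true) => none

theorem stepsTM_bb2 :
    stepsTM bb2 5 (initCfg 0) = some ⟨1, -1, fun j => decide (-2 ≤ j ∧ j ≤ 1)⟩ := by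
  refine congrArg (fun tape => some (Cfg.mk (1 : Fin 2) (-1) tape)) (funext fun j => ?_)
  simp only [Function.update_apply, initCfg, Dir.move]
  split_ifs <;> simp <;> omega

theorem computes_bb2 : Computes bb2 0 [true, true, true, true] 5 := by
  refine ⟨_, stepsTM_bb2, rfl, -2, fun k hk => ?_, fun j hj => ?_, fun _ => ⟨rfl, rfl⟩⟩
  · simp only [List.length_cons, List.length_nil] at hk
    interval_cases k <;> rfl
  · simp only [decide_eq_true_eq, List.length_cons, List.length_nil] at hj ⊢
    omega

/-- K_TBB(2) = 5: among all Turing machines with at most 2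
states that halt on the all-zero tape with a computed word containing exactly
BB(2) = 4 ones, the minimum number of steps taken before halting is
exactly 5. -/
theorem min_running_time_busy_beaver_2 :
    IsLeast
      {t : ℕ |
        ∃ (f : Fin 2 × Bool → Option (Fin 2 × Bool × Dir)) (w : List Bool),
          Computes f 0 w t ∧ w.count true = 4} 5 := by
  refine ⟨⟨bb2, [true, true, true, true], computes_bb2, rfl⟩, ?_⟩
  rintro t ⟨f, w, ⟨c, hrun, hhalt, hw⟩, hcount⟩
  by_contra! ht
  have hle : #((range t).image (headAt f (initCfg 0))) ≤ t :=
    card_image_le.trans (card_range t).le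
  have hge := hcount ▸ count_true_le_card_headAt hrun hw
  have hinj : Set.InjOn (headAt f (initCfg 0)) (range t) :=
    card_image_iff.mp (by rw [card_range]; omega)
  refine not_halted_of_headAt_injOn hrun (by omega) (hinj.mono fun i hi => ?_) hhalt
  simp only [Set.mem_insert_iff, Set.mem_singleton_iff] at hi
  simp only [coe_range, Set.mem_Iio]
  omega
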